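/- There is no pair (λ, ν) ∈ [0,∞)⁶ × [0,∞)⁶ with λ_j = λ_{j+3} for all j ∈ {0,1,2} satisfying the system: for every j ∈ {0,…,5} (indices taken modulo 6), −(2/3)·λ_j·log(λ_j) + (7/9)·λ_j − (2/9)·(λ_{j+1} + λ_{j+2} + λ_{j+4} + λ_{j+5}) + (1/9)·λ_{j+3} − ν_j = 0; 0 < ∑_{k=0}^{5} λ_k² < 6; and λ_j·ν_j = 0 for every j ∈ {0,…,5}. -/

import Mathlib

/-! With opposite entries equal, the stationarity equation at `j` only involves
`a = λ₀, b = λ₁, c = λ₂` and reads `g(λ_j) + (2/3)(a + b + c) = -(3/2) ν_j` with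
`g x = x log x - 2x`. A vanishing coordinate would force `a + b + c = 0`, so all three are
positive, the multipliers vanish and `g a = g b = g c`. The constraint `a² + b² + c² < 3`
puts them in `(0, e)`, where `g' = log x - 1 < 0`, so `a = b = c`; then `a log a = 0`
gives `a = 1` and `∑ λ_k² = 6`, contradicting the strict constraint. -/

open Real

theorem strictAntiOn_mul_log_sub_two_mul :
    StrictAntiOn (fun x : ℝ => x * log x - 2 * x) (Set.Icc 0 (exp 1)) := by
  apply strictAntiOn_of_deriv_neg (convex_Icc 0 (exp 1))
  · exact (continuous_mul_log.sub (continuous_const.mul continuous_id)).continuousOn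
  · intro x hx
    rw [interior_Icc] at hx
    have hderiv : HasDerivAt (fun x : ℝ => x * log x - 2 * x) (log x + 1 - 2 * 1) x :=
      (hasDerivAt_mul_log hx.1.ne').sub ((hasDerivAt_id x).const_mul 2)
    have hlog : log x < 1 := by simpa using log_lt_log hx.1 hx.2
    rw [hderiv.deriv]
    linarith

theorem pos_and_mul_log_sub_two_mul_eq_of_kkt {x ν S : ℝ} (hx : 0 ≤ x) (hν : 0 ≤ ν)
    (hcompl : x * ν = 0) (hS : 0 < S)
    (hstat : x * log x - 2 * x + 2 / 3 * S + 3 / 2 * ν = 0) :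
    0 < x ∧ x * log x - 2 * x = -(2 / 3) * S := by
  have hx_pos : 0 < x := by
    refine hx.lt_of_ne' fun hx0 => ?_
    simp only [hx0, zero_mul, mul_zero, sub_zero, zero_add] at hstat
    linarith
  have hν0 : ν = 0 := (mul_eq_zero.mp hcompl).resolve_left hx_pos.ne'
  exact ⟨hx_pos, by rw [hν0] at hstat; linarith⟩

theorem not_reduced_kkt {a b c : ℝ} (ha : 0 < a) (hb : 0 < b) (hc : 0 < c)
    (hsq : a ^ 2 + b ^ 2 + c ^ 2 < 3)
    (hga : a * log a - 2 * a = -(2 / 3) * (a + b + c))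
    (hgb : b * log b - 2 * b = -(2 / 3) * (a + b + c))
    (hgc : c * log c - 2 * c = -(2 / 3) * (a + b + c)) : False := by
  have hmem : ∀ x, 0 < x → x ^ 2 < 3 → x ∈ Set.Icc 0 (exp 1) := fun x hx hx3 =>
    ⟨hx.le, by nlinarith [exp_one_gt_d9]⟩
  have hma := hmem a ha (by nlinarith)
  have hab : a = b :=
    strictAntiOn_mul_log_sub_two_mul.injOn hma (hmem b hb (by nlinarith)) (hga.trans hgb.symm)
  have hac : a = c :=
    strictAntiOn_mul_log_sub_two_mul.injOn hma (hmem c hc (by nlinarith)) (hga.trans hgc.symm)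
  subst hab hac
  have hlog : log a = 0 := by
    refine (mul_eq_zero.mp (?_ : a * log a = 0)).resolve_left ha.ne'
    linarith
  have ha1 : a = 1 := eq_one_of_pos_of_log_eq_zero ha hlog
  subst ha1
  norm_num at hsq

theorem kkt_Z6_opposite_equal :
    ¬ ∃ (l ν : ZMod 6 → ℝ),
      (∀ j, 0 ≤ l j) ∧ (∀ j, 0 ≤ ν j) ∧
      (l 0 = l 3 ∧ l 1 = l 4 ∧ l 2 = l 5) ∧
      (∀ j : ZMod 6,
        -(2/3 : ℝ) * l j * Real.log (l j) + (7/9 : ℝ) * l j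
          - (2/9 : ℝ) * (l (j+1) + l (j+2) + l (j+4) + l (j+5))
          + (1/9 : ℝ) * l (j+3) - ν j = 0) ∧
      (0 < ∑ k : ZMod 6, l k ^ 2) ∧ ((∑ k : ZMod 6, l k ^ 2) < 6) ∧
      (∀ j, l j * ν j = 0) := by
  rintro ⟨l, ν, hl, hν, ⟨h03, h14, h25⟩, heq, hpos, hlt, hcompl⟩
  have hsum : ∑ k : ZMod 6, l k ^ 2 = 2 * (l 0 ^ 2 + l 1 ^ 2 + l 2 ^ 2) := by
    rw [show ∑ k : ZMod 6, l k ^ 2 = ∑ k : Fin 6, l k ^ 2 from rfl, Fin.sum_univ_six]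
    change l 0 ^ 2 + l 1 ^ 2 + l 2 ^ 2 + l 3 ^ 2 + l 4 ^ 2 + l 5 ^ 2 = _
    rw [← h03, ← h14, ← h25]
    ring
  rw [hsum] at hpos hlt
  have hS : 0 < l 0 + l 1 + l 2 := by nlinarith [hl 0, hl 1, hl 2]
  have e0 : -(2/3 : ℝ) * l 0 * log (l 0) + 7/9 * l 0 - 2/9 * (l 1 + l 2 + l 4 + l 5)
      + 1/9 * l 3 - ν 0 = 0 := heq 0
  have e1 : -(2/3 : ℝ) * l 1 * log (l 1) + 7/9 * l 1 - 2/9 * (l 2 + l 3 + l 5 + l 0)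
      + 1/9 * l 4 - ν 1 = 0 := heq 1
  have e2 : -(2/3 : ℝ) * l 2 * log (l 2) + 7/9 * l 2 - 2/9 * (l 3 + l 4 + l 0 + l 1)
      + 1/9 * l 5 - ν 2 = 0 := heq 2
  rw [← h03, ← h14, ← h25] at e0 e1 e2
  obtain ⟨ha, hga⟩ := pos_and_mul_log_sub_two_mul_eq_of_kkt (hl 0) (hν 0) (hcompl 0) hS
    (by linear_combination (-3/2 : ℝ) * e0)
  obtain ⟨hb, hgb⟩ := pos_and_mul_log_sub_two_mul_eq_of_kkt (hl 1) (hν 1) (hcompl 1) hS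
    (by linear_combination (-3/2 : ℝ) * e1)
  obtain ⟨hc, hgc⟩ := pos_and_mul_log_sub_two_mul_eq_of_kkt (hl 2) (hν 2) (hcompl 2) hS
    (by linear_combination (-3/2 : ℝ) * e2)
  exact not_reduced_kkt ha hb hc (by linarith) hga hgb hgc
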